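/- Let G be a connected graph and e an edge of G that is not a bridge. Then χ_dom(G) ≤ χ_dom(G − e) + 1. -/

import Mathlib

/-!
Let `e = ab`. From a dominated coloring of `G - e`, give `b` a new color: this separates the
ends of `e`, so it is a proper coloring of `G`, and the new class `{b}` is dominated by any
neighbour of `b`. Since `domChromatic` is an `sInf` over ℕ, it is `0` for a graph without
dominated colorings, so one also needs: if `G` has a dominated coloring, so has `G - e`.
Give both `a` and `b` new colors; the singleton classes `{a}` and `{b}` are dominated by
neighbours in `G - e`, which exist because `e` is not a bridge, and every other class avoids
`a` and `b`, so its dominating vertex reaches it without using `e`.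
-/

open SimpleGraph

/-- A coloring is a dominated coloring if every (nonempty) color class is contained
in the open neighborhood of some vertex. -/
def IsDomColoring {V α : Type*} (G : SimpleGraph V) (C : G.Coloring α) : Prop :=
  ∀ c : α, (∃ u, C u = c) → ∃ v, ∀ u, C u = c → G.Adj v u

/-- The dominated chromatic number of a graph: the least number of colors
in a dominated coloring. -/
noncomputable def domChromatic {V : Type*} (G : SimpleGraph V) : ℕ :=
  sInf {n | ∃ C : G.Coloring (Fin n), IsDomColoring G C}

section

variable {V α : Type*} {G : SimpleGraph V}

namespace SimpleGraph

theorem Reachable.not_isIsolated_of_ne {u v : V} (h : G.Reachable u v) (hne : u ≠ v) :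
    ¬ G.IsIsolated u := by
  obtain ⟨p⟩ := h
  exact (p.adj_snd (Walk.not_nil_of_ne hne)).not_isIsolated_left

def Coloring.ofDeleteEdge {a b : V} (C : (G.deleteEdges {s(a, b)}).Coloring α)
    (hab : C a ≠ C b) : G.Coloring α :=
  Coloring.mk C fun {v w} h => by
    by_cases hvw : s(v, w) = s(a, b)
    · rcases Sym2.eq_iff.mp hvw with ⟨rfl, rfl⟩ | ⟨rfl, rfl⟩
      exacts [hab, hab.symm]
    · exact C.valid (deleteEdges_adj.mpr ⟨h, hvw⟩)

variable [DecidableEq V]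

def Coloring.isolate (C : G.Coloring α) (b : V) : G.Coloring (Option α) :=
  Coloring.mk (fun v => if v = b then none else some (C v)) fun {v w} h => by
    split_ifs with hv hw hw
    · exact (h.ne (hv.trans hw.symm)).elim
    all_goals simp [C.valid h]

theorem Coloring.isolate_apply (C : G.Coloring α) (b v : V) :
    C.isolate b v = if v = b then none else some (C v) :=
  rfl

@[simp]
theorem Coloring.isolate_eq_none {C : G.Coloring α} {b v : V} :
    C.isolate b v = none ↔ v = b := by
  simp [isolate_apply]

@[simp]
theorem Coloring.isolate_eq_some {C : G.Coloring α} {b v : V} {c : α} :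
    C.isolate b v = some c ↔ v ≠ b ∧ C v = c := by
  simp [isolate_apply]

end SimpleGraph

theorem IsDomColoring.recolorOfEmbedding {β : Type*} {C : G.Coloring α}
    (hC : IsDomColoring G C) (f : α ↪ β) : IsDomColoring G (G.recolorOfEmbedding f C) := by
  rintro _ ⟨u, rfl⟩
  obtain ⟨v, hv⟩ := hC (C u) ⟨u, rfl⟩
  exact ⟨v, fun w hw => hv w (f.injective hw)⟩

theorem IsDomColoring.exists_fin [Fintype α] {C : G.Coloring α} (hC : IsDomColoring G C) :
    ∃ C' : G.Coloring (Fin (Fintype.card α)), IsDomColoring G C' :=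
  ⟨_, hC.recolorOfEmbedding (Fintype.equivFin α).toEmbedding⟩

theorem IsDomColoring.ofDeleteEdge {a b : V} {C : (G.deleteEdges {s(a, b)}).Coloring α}
    (hC : IsDomColoring (G.deleteEdges {s(a, b)}) C) (hab : C a ≠ C b) :
    IsDomColoring G (C.ofDeleteEdge hab) := by
  intro c hc
  obtain ⟨v, hv⟩ := hC c hc
  exact ⟨v, fun w hw => (hv w hw).1⟩

theorem IsDomColoring.deleteEdge {a b : V} {C : G.Coloring α} (hC : IsDomColoring G C)
    (ha : ∀ v, C v = C a → v = a) (hb : ∀ v, C v = C b → v = b)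
    (ha' : ¬ (G.deleteEdges {s(a, b)}).IsIsolated a)
    (hb' : ¬ (G.deleteEdges {s(a, b)}).IsIsolated b) :
    IsDomColoring (G.deleteEdges {s(a, b)}) (C.comap (Hom.ofLE (G.deleteEdges_le _))) := by
  rintro _ ⟨u, rfl⟩
  change ∃ v, ∀ w, C w = C u → _
  by_cases hua : C u = C a
  · obtain ⟨v, hv⟩ := exists_adj_iff_not_isIsolated.mpr ha'
    exact ⟨v, fun w hw => ha w (hw.trans hua) ▸ hv.symm⟩
  by_cases hub : C u = C b
  · obtain ⟨v, hv⟩ := exists_adj_iff_not_isIsolated.mpr hb'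
    exact ⟨v, fun w hw => hb w (hw.trans hub) ▸ hv.symm⟩
  obtain ⟨v, hv⟩ := hC (C u) ⟨u, rfl⟩
  refine ⟨v, fun w hw => deleteEdges_adj.mpr ⟨hv w hw, fun hvw => ?_⟩⟩
  rcases Sym2.eq_iff.mp hvw with ⟨-, rfl⟩ | ⟨-, rfl⟩
  exacts [hub hw.symm, hua hw.symm]

theorem IsDomColoring.isolate [DecidableEq V] {C : G.Coloring α} (hC : IsDomColoring G C)
    {b : V} (hb : ¬ G.IsIsolated b) : IsDomColoring G (C.isolate b) := by
  rintro (_ | c) ⟨u, hu⟩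
  · obtain ⟨v, hv⟩ := exists_adj_iff_not_isIsolated.mpr hb
    exact ⟨v, fun w hw => by simpa [Coloring.isolate_eq_none.mp hw] using hv.symm⟩
  · obtain ⟨v, hv⟩ := hC c ⟨u, (Coloring.isolate_eq_some.mp hu).2⟩
    exact ⟨v, fun w hw => hv w (Coloring.isolate_eq_some.mp hw).2⟩

theorem domChromatic_le_card [Fintype α] {C : G.Coloring α} (hC : IsDomColoring G C) :
    domChromatic G ≤ Fintype.card α :=
  Nat.sInf_le hC.exists_fin

/-- `hGH` handles the junk value: without dominated colorings of `H`, `domChromatic H = 0`. -/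
theorem domChromatic_le_add {W : Type*} {H : SimpleGraph W} (k : ℕ)
    (hHG : ∀ n (C : H.Coloring (Fin n)), IsDomColoring H C → domChromatic G ≤ n + k)
    (hGH : ∀ n (C : G.Coloring (Fin n)), IsDomColoring G C →
      ∃ m, ∃ C' : H.Coloring (Fin m), IsDomColoring H C') :
    domChromatic G ≤ domChromatic H + k := by
  by_cases hH : ∃ n, ∃ C : H.Coloring (Fin n), IsDomColoring H C
  · obtain ⟨C, hC⟩ := Nat.sInf_mem hH
    exact hHG _ C hC
  · have hG : {n | ∃ C : G.Coloring (Fin n), IsDomColoring G C} = ∅ :=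
      Set.eq_empty_of_forall_notMem fun n ⟨C, hC⟩ => hH (hGH n C hC)
    simp [domChromatic, hG]

end

theorem domChromatic_le_deleteEdge_add_one_general {V : Type*} (G : SimpleGraph V) (e : Sym2 V)
    (he : e ∈ G.edgeSet) (hb : ¬ G.IsBridge e) :
    domChromatic G ≤ domChromatic (G.deleteEdges {e}) + 1 := by
  classical
  induction e using Sym2.ind with | _ a b => ?_
  have hab : G.Adj a b := he
  have hreach : (G.deleteEdges {s(a, b)}).Reachable a b := not_not.mp (isBridge_iff.not.mp hb)
  have haH := hreach.not_isIsolated_of_ne hab.ne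
  have hbH := hreach.symm.not_isIsolated_of_ne hab.ne.symm
  refine domChromatic_le_add 1 (fun n C hC => ?_) (fun n C hC => ?_)
  · simpa using domChromatic_le_card
      ((hC.isolate hbH).ofDeleteEdge (by simp [Coloring.isolate_apply, hab.ne]))
  · have hD := ((hC.isolate hab.not_isIsolated_left).isolate hab.not_isIsolated_right).deleteEdge
      (by simp [Coloring.isolate_apply, hab.ne]) (by simp [Coloring.isolate_apply]) haH hbH
    exact ⟨_, hD.exists_fin⟩

theorem domChromatic_le_deleteEdge_add_one {V : Type*} (G : SimpleGraph V) (e : Sym2 V)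
    (hG : G.Connected) (he : e ∈ G.edgeSet) (hb : ¬ G.IsBridge e) :
    domChromatic G ≤ domChromatic (G.deleteEdges {e}) + 1 :=
  domChromatic_le_deleteEdge_add_one_general G e he hb
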